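/- Let I ⊆ ℝ^n be a nonempty closed convex cone, S a linear subspace of ℝ^n with S ⊆ I, and D := −I. Suppose that every ξ ∈ ℝ^n can be written as ξ = ξ_I + ξ_D with ξ_I ∈ I and ξ_D ∈ D. Then for any θ₀ ∈ ℝ^n, setting θ_I := Π(θ₀|I) and θ_D := Π(θ₀|D), one has θ₀ ∈ S if and only if both θ_I ∈ S and θ_D ∈ S. -/
import Mathlib

open scoped RealInnerProductSpace

/-- The metric projection onto a subset `K` of `ℝⁿ`: the (for nonempty closed convex `K`,
unique) point of `K` nearest to `y`. -/
noncomputable def proj {n : ℕ} (K : Set (EuclideanSpace ℝ (Fin n)))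
    (y : EuclideanSpace ℝ (Fin n)) : EuclideanSpace ℝ (Fin n) := by
  classical exact if h : ∃ p ∈ K, ∀ q ∈ K, ‖y - p‖ ≤ ‖y - q‖ then h.choose else 0

lemma proj_spec {n : ℕ} (K : Set (EuclideanSpace ℝ (Fin n))) (hne : K.Nonempty)
    (hclosed : IsClosed K) (hconv : Convex ℝ K) (y : EuclideanSpace ℝ (Fin n)) :
    proj K y ∈ K ∧ ∀ w ∈ K, ⟪y - proj K y, w - proj K y⟫ ≤ 0 := by
  classical
  haveI : Nonempty K := hne.to_subtype
  obtain ⟨v, hv, hveq⟩ := exists_norm_eq_iInf_of_complete_convex hne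
    (hclosed.isComplete) hconv y
  have hbdd : BddBelow (Set.range fun w : K => ‖y - w‖) :=
    ⟨0, Set.forall_mem_range.2 fun _ => norm_nonneg _⟩
  have h : ∃ p ∈ K, ∀ q ∈ K, ‖y - p‖ ≤ ‖y - q‖ := by
    refine ⟨v, hv, fun q hq => ?_⟩
    rw [hveq]
    exact ciInf_le hbdd ⟨q, hq⟩
  have hmemmin := h.choose_spec
  have hproj : proj K y = h.choose := by
    unfold proj
    simp [dif_pos h]
  have hmem : proj K y ∈ K := hproj ▸ hmemmin.1
  refine ⟨hmem, ?_⟩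
  have heq : ‖y - proj K y‖ = ⨅ w : K, ‖y - w‖ := by
    apply le_antisymm
    · apply le_ciInf
      intro w
      rw [hproj]
      exact hmemmin.2 w w.2
    · exact ciInf_le hbdd ⟨_, hmem⟩
  exact (norm_eq_iInf_iff_real_inner_le_zero hconv hmem).1 heq

/-- Lemma 6: let `I` be a nonempty closed convex cone, `S ⊆ I` a linear
subspace, and `D = −I`; if every `ξ ∈ ℝⁿ` decomposes as `ξ = ξ_I + ξ_D` with `ξ_I ∈ I`,
`ξ_D ∈ D`, then `θ₀ ∈ S` if and only if both `Π(θ₀|I) ∈ S` and `Π(θ₀|D) ∈ S`. -/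
theorem stmt18 {n : ℕ} (I : Set (EuclideanSpace ℝ (Fin n)))
    (hne : I.Nonempty) (hclosed : IsClosed I) (hconv : Convex ℝ I)
    (hcone : ∀ θ ∈ I, ∀ t : ℝ, 0 < t → t • θ ∈ I)
    (S : Submodule ℝ (EuclideanSpace ℝ (Fin n)))
    (hSI : (S : Set (EuclideanSpace ℝ (Fin n))) ⊆ I)
    (hdecomp : ∀ ξ : EuclideanSpace ℝ (Fin n), ∃ ξI ∈ I, ∃ ξD ∈ -I, ξ = ξI + ξD)
    (θ₀ : EuclideanSpace ℝ (Fin n)) :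
    θ₀ ∈ S ↔ (proj I θ₀ ∈ S ∧ proj (-I) θ₀ ∈ S) := by
  have hneD : (-I).Nonempty := hne.neg
  have hclosedD : IsClosed (-I) := hclosed.neg
  have hconvD : Convex ℝ (-I) := hconv.neg
  obtain ⟨hpI, hpIineq⟩ := proj_spec I hne hclosed hconv θ₀
  obtain ⟨hpD, hpDineq⟩ := proj_spec (-I) hneD hclosedD hconvD θ₀
  set p := proj I θ₀ with hp
  set q := proj (-I) θ₀ with hq
  constructor
  · intro hθ
    have hθI : θ₀ ∈ I := hSI hθ
    have hθD : θ₀ ∈ -I := by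
      rw [Set.mem_neg]; exact hSI (S.neg_mem hθ)
    have h1 : p = θ₀ := by
      have h0 : ⟪θ₀ - p, θ₀ - p⟫ = 0 :=
        le_antisymm (hpIineq θ₀ hθI) real_inner_self_nonneg
      have := (inner_self_eq_zero (𝕜 := ℝ)).1 h0
      rw [sub_eq_zero] at this
      exact this.symm
    have h2 : q = θ₀ := by
      have h0 : ⟪θ₀ - q, θ₀ - q⟫ = 0 :=
        le_antisymm (hpDineq θ₀ hθD) real_inner_self_nonneg
      have := (inner_self_eq_zero (𝕜 := ℝ)).1 h0
      rw [sub_eq_zero] at this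
      exact this.symm
    exact ⟨h1 ▸ hθ, h2 ▸ hθ⟩
  · rintro ⟨hpS, hqS⟩
    set u := θ₀ - p with hu
    set v := θ₀ - q with hv
    -- I is closed under addition
    have hadd : ∀ a ∈ I, ∀ b ∈ I, a + b ∈ I := by
      intro a ha b hb
      have hc := hconv ha hb (by norm_num : (0:ℝ) ≤ 1/2) (by norm_num : (0:ℝ) ≤ 1/2)
        (by norm_num)
      have h2 := hcone _ hc 2 (by norm_num)
      rw [smul_add, smul_smul, smul_smul] at h2
      norm_num at h2
      exact h2
    -- u ⟂ S
    have huS : ∀ x ∈ S, ⟪u, x⟫ = 0 := by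
      intro x hx
      have h1 : ⟪u, x⟫ ≤ 0 := by
        have := hpIineq (p + x) (hadd p hpI x (hSI hx))
        simpa using this
      have h2 : ⟪u, -x⟫ ≤ 0 := by
        have := hpIineq (p + (-x)) (hadd p hpI (-x) (hSI (S.neg_mem hx)))
        simpa using this
      rw [inner_neg_right] at h2
      linarith
    -- v ⟂ S
    have hvS : ∀ x ∈ S, ⟪v, x⟫ = 0 := by
      intro x hx
      have hmem : ∀ z ∈ S, q + z ∈ -I := by
        intro z hz
        rw [Set.mem_neg]
        have : -(q + z) = -q + -z := by abel
        rw [this]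
        exact hadd (-q) hpD (-z) (hSI (S.neg_mem hz))
      have h1 : ⟪v, x⟫ ≤ 0 := by
        have := hpDineq (q + x) (hmem x hx)
        simpa using this
      have h2 : ⟪v, -x⟫ ≤ 0 := by
        have := hpDineq (q + (-x)) (hmem (-x) (S.neg_mem hx))
        simpa using this
      rw [inner_neg_right] at h2
      linarith
    -- u = v
    have huv : u = v := by
      have hdiff : u - v = q - p := by rw [hu, hv]; abel
      have hdS : u - v ∈ S := hdiff ▸ S.sub_mem hqS hpS
      have : ⟪u - v, u - v⟫ = 0 := by
        rw [inner_sub_left]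
        rw [huS _ hdS, hvS _ hdS]
        ring
      have := (inner_self_eq_zero (𝕜 := ℝ)).1 this
      exact sub_eq_zero.1 this
    -- ⟪u, p⟫ = 0
    have hup : ⟪u, p⟫ = 0 := by
      have h1 : ⟪u, p⟫ ≤ 0 := by
        have := hpIineq ((2:ℝ) • p) (hcone p hpI 2 (by norm_num))
        have h2 : (2:ℝ) • p - p = p := by
          rw [two_smul]; abel
        rw [h2] at this
        exact this
      have h2 : ⟪u, p⟫ ≥ 0 := by
        have := hpIineq (((1:ℝ)/2) • p) (hcone p hpI (1/2) (by norm_num))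
        have h3 : ((1:ℝ)/2) • p - p = -(((1:ℝ)/2) • p) := by module
        rw [h3, inner_neg_right, inner_smul_right] at this
        nlinarith
      linarith
    -- ⟪v, q⟫ = 0
    have hnegcone : ∀ θ ∈ -I, ∀ t : ℝ, 0 < t → t • θ ∈ -I := by
      intro θ hθ t ht
      rw [Set.mem_neg] at *
      rw [← smul_neg]
      exact hcone _ hθ t ht
    have hvq : ⟪v, q⟫ = 0 := by
      have h1 : ⟪v, q⟫ ≤ 0 := by
        have := hpDineq ((2:ℝ) • q) (hnegcone q hpD 2 (by norm_num))
        have h2 : (2:ℝ) • q - q = q := by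
          rw [two_smul]; abel
        rw [h2] at this
        exact this
      have h2 : ⟪v, q⟫ ≥ 0 := by
        have := hpDineq (((1:ℝ)/2) • q) (hnegcone q hpD (1/2) (by norm_num))
        have h3 : ((1:ℝ)/2) • q - q = -(((1:ℝ)/2) • q) := by module
        rw [h3, inner_neg_right, inner_smul_right] at this
        nlinarith
      linarith
    -- decompose u, conclude u = 0
    obtain ⟨ξI, hξI, ξD, hξD, hξ⟩ := hdecomp u
    have hI : ⟪u, ξI⟫ ≤ 0 := by
      have := hpIineq ξI hξI
      rw [inner_sub_right] at this
      linarith [hup]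
    have hD : ⟪u, ξD⟫ ≤ 0 := by
      have := hpDineq ξD hξD
      rw [inner_sub_right] at this
      rw [huv]
      linarith [hvq]
    have hu0 : u = 0 := by
      have : ⟪u, u⟫ = ⟪u, ξI⟫ + ⟪u, ξD⟫ := by
        rw [hξ, inner_add_right]
      have h0 : ⟪u, u⟫ ≤ 0 := by linarith
      have := le_antisymm h0 real_inner_self_nonneg
      exact (inner_self_eq_zero (𝕜 := ℝ)).1 this
    have : θ₀ = p := by
      have := hu0
      rw [hu, sub_eq_zero] at this
      exact this
    rw [this]
    exact hpS
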